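/- Let n, k ≥ 1 and let K_0, …, K_{k−1} ∈ Matrix (Fin n) (Fin n) ℂ satisfy ∑_{i=0}^{k−1} K_i† K_i = I_n. Then there exists a unitary matrix U ∈ Matrix ((Fin n) × (Fin k)) ((Fin n) × (Fin k)) ℂ such that for every ρ ∈ Matrix (Fin n) (Fin n) ℂ, ∑_{i=0}^{k−1} K_i ρ K_i† = Tr_B[U · (ρ ⊗ |0⟩⟨0|_B) · U†]. In particular, a quantum channel with k Kraus operators admits a Stinespring dilation with ancilla space of dimension exactly k. -/

import Mathlib

open Matrix Kronecker

/-- Partial trace over the second factor `B`. -/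
noncomputable def ptraceB {A B : Type*} [Fintype B] (M : Matrix (A × B) (A × B) ℂ) :
    Matrix A A ℂ :=
  Matrix.of fun a a' => ∑ b : B, M (a, b) (a', b)

/-- The ancilla state `|0⟩⟨0|` on `Fin k`. -/
def ket0bra0 (m : ℕ) : Matrix (Fin m) (Fin m) ℂ :=
  Matrix.of fun i j => if i.val = 0 ∧ j.val = 0 then 1 else 0

/-!
Stack the Kraus operators into the single operator `V ψ = ∑ i, K i ψ ⊗ |i⟩`. The completeness
relation says exactly `Vᴴ V = 1`, i.e. the columns of `V` are orthonormal, so they extend to an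
orthonormal basis of `ℂⁿ ⊗ ℂᵏ`; the resulting unitary `U` satisfies `U (ψ ⊗ |0⟩) = V ψ`. Hence
`U (ρ ⊗ |0⟩⟨0|) Uᴴ = V ρ Vᴴ`, whose partial trace over the ancilla is `∑ i, K i ρ (K i)ᴴ`.
-/

namespace Matrix

section Unitary

variable {𝕜 m n : Type*} [RCLike 𝕜] [Fintype m]

theorem orthonormal_toLp_col_of_conjTranspose_mul_self [DecidableEq n] {V : Matrix m n 𝕜}
    (hV : Vᴴ * V = 1) : Orthonormal 𝕜 fun j => WithLp.toLp 2 fun i => V i j := by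
  rw [orthonormal_iff_ite]
  intro j j'
  rw [EuclideanSpace.inner_toLp_toLp, ← one_apply, ← hV, mul_apply]
  exact Finset.sum_congr rfl fun _ _ => mul_comm _ _

theorem exists_mem_unitaryGroup_submatrix_eq [DecidableEq m] [DecidableEq n] {V : Matrix m n 𝕜}
    (hV : Vᴴ * V = 1) (e : n ↪ m) : ∃ U ∈ unitaryGroup m 𝕜, U.submatrix id e = V := by
  set col : n → EuclideanSpace 𝕜 m := fun j => WithLp.toLp 2 fun i => V i j
  set v : m → EuclideanSpace 𝕜 m := Function.extend e col 0
  have hv : Orthonormal 𝕜 ((Set.range e).domRestrict v) := by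
    convert (orthonormal_toLp_col_of_conjTranspose_mul_self hV).comp _
      (Equiv.ofInjective e e.injective).symm.injective
    ext ⟨_, j, rfl⟩ : 1
    simpa [v] using e.injective.extend_apply col 0 j
  obtain ⟨b, hb⟩ := hv.exists_orthonormalBasis_extension_of_card_eq (by simp)
  refine ⟨(EuclideanSpace.basisFun m 𝕜).toBasis.toMatrix b,
    (EuclideanSpace.basisFun m 𝕜).toMatrix_orthonormalBasis_mem_unitary b, ?_⟩
  ext i j
  simp [Module.Basis.toMatrix_apply, hb (e j) ⟨j, rfl⟩, v, col, e.injective.extend_apply]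

end Unitary

theorem mul_kronecker_single_mul_conjTranspose {R m n ι : Type*} [Semiring R] [StarRing R]
    [Fintype n] [Fintype ι] [DecidableEq ι]
    (U : Matrix m (n × ι) R) (ρ : Matrix n n R) (i : ι) :
    U * (ρ ⊗ₖ single i i 1) * Uᴴ = U.submatrix id (·, i) * ρ * (U.submatrix id (·, i))ᴴ := by
  ext x y
  simp [mul_apply, Fintype.sum_prod_type, single_apply, ite_and, Finset.sum_mul]

end Matrix

theorem ket0bra0_eq_single (m : ℕ) [NeZero m] : ket0bra0 m = single 0 0 1 := by
  ext i j
  simp only [ket0bra0, of_apply, single_apply, Fin.ext_iff, Fin.val_zero, @eq_comm ℕ 0]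

def krausStack {A ι R : Type*} (K : ι → Matrix A A R) : Matrix (A × ι) A R :=
  of fun p c => K p.2 p.1 c

section KrausStack

variable {A ι : Type*} [Fintype A] [Fintype ι]

theorem conjTranspose_krausStack_mul_self {R : Type*} [Semiring R] [StarRing R]
    (K : ι → Matrix A A R) : (krausStack K)ᴴ * krausStack K = ∑ i, (K i)ᴴ * K i := by
  ext c c'
  simp only [mul_apply, Fintype.sum_prod_type, Matrix.sum_apply]
  exact Finset.sum_comm

theorem ptraceB_krausStack_mul_mul (K : ι → Matrix A A ℂ) (ρ : Matrix A A ℂ) :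
    ptraceB (krausStack K * ρ * (krausStack K)ᴴ) = ∑ i, K i * ρ * (K i)ᴴ := by
  ext a a'
  simp only [ptraceB, of_apply, Matrix.sum_apply]
  rfl

end KrausStack

theorem stinespring_dilation_of_kraus_general (n k : ℕ) (hk : 1 ≤ k)
    (K : Fin k → Matrix (Fin n) (Fin n) ℂ)
    (hK : ∑ i : Fin k, (K i)ᴴ * K i = 1) :
    ∃ U : Matrix (Fin n × Fin k) (Fin n × Fin k) ℂ,
      Uᴴ * U = 1 ∧ U * Uᴴ = 1 ∧
      ∀ ρ : Matrix (Fin n) (Fin n) ℂ,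
        ∑ i : Fin k, K i * ρ * (K i)ᴴ = ptraceB (U * (ρ ⊗ₖ ket0bra0 k) * Uᴴ) := by
  have : NeZero k := ⟨by omega⟩
  obtain ⟨U, hU, hUV⟩ := exists_mem_unitaryGroup_submatrix_eq (V := krausStack K)
    (by rw [conjTranspose_krausStack_mul_self, hK]) (Function.Embedding.sectL (Fin n) (0 : Fin k))
  refine ⟨U, mem_unitaryGroup_iff'.1 hU, mem_unitaryGroup_iff.1 hU, fun ρ => ?_⟩
  have hUK : U.submatrix id (·, 0) = krausStack K := hUV
  rw [ket0bra0_eq_single, mul_kronecker_single_mul_conjTranspose, hUK, ptraceB_krausStack_mul_mul]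

/-- A quantum channel given by `k` Kraus operators satisfying the completeness relation
admits a Stinespring dilation with ancilla space of dimension exactly `k`. -/
theorem stinespring_dilation_of_kraus (n k : ℕ) (hn : 1 ≤ n) (hk : 1 ≤ k)
    (K : Fin k → Matrix (Fin n) (Fin n) ℂ)
    (hK : ∑ i : Fin k, (K i)ᴴ * K i = 1) :
    ∃ U : Matrix (Fin n × Fin k) (Fin n × Fin k) ℂ,
      Uᴴ * U = 1 ∧ U * Uᴴ = 1 ∧
      ∀ ρ : Matrix (Fin n) (Fin n) ℂ,
        ∑ i : Fin k, K i * ρ * (K i)ᴴ = ptraceB (U * (ρ ⊗ₖ ket0bra0 k) * Uᴴ) :=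
  stinespring_dilation_of_kraus_general n k hk K hK
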